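/- arXiv:math/0703525 — 5 statements merged into one kernel-verified Lean document; each statement's English description precedes it below -/
import Mathlib

section
/- Let A be an n×n complex J_{p,q}-Hermitian matrix (n = p+q, p,q ≥ 1) admitting a J-orthonormal eigenbasis consisting of timelike eigenvectors v₁, …, v_p with ⟨vᵢ,vᵢ⟩ = 1 and real eigenvalues λ₁ ≤ ⋯ ≤ λ_p, and spacelike eigenvectors w₁, …, w_q with ⟨wⱼ,wⱼ⟩ = −1 and real eigenvalues μ₁ ≤ ⋯ ≤ μ_q, all pairwise J-orthogonal, and assume μ_q ≤ λ₁. Then the Rayleigh quotient R_A(x) = ⟨x, Ax⟩/⟨x,x⟩ satisfies: λ₁ equals the minimum of R_A(x) over all timelike x (attained at v₁), and μ_q equals the maximum of R_A(x) over all spacelike x (attained at w_q). -/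
open Matrix

/-- The pseudo-Hermitian form of signature (p,q) on ℂ^{p+q}:
`⟨x,y⟩ = Σ_{i≤p} x̄ᵢyᵢ − Σ_{i>p} x̄ᵢyᵢ`. -/
noncomputable def hform (p q : ℕ) (x y : Fin (p + q) → ℂ) : ℂ :=
  ∑ i : Fin (p + q), (if (i : ℕ) < p then (1 : ℂ) else -1) * (starRingEnd ℂ) (x i) * y i

/-- The matrix `J_{p,q} = diag(1,…,1,−1,…,−1)` (p ones, q minus-ones). -/
def Jmat (p q : ℕ) : Matrix (Fin (p + q)) (Fin (p + q)) ℂ :=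
  Matrix.diagonal fun i => if (i : ℕ) < p then 1 else -1

section helpers
variable {p q : ℕ}

lemma hform_add_right (x y z : Fin (p+q) → ℂ) :
    hform p q x (y + z) = hform p q x y + hform p q x z := by
  simp [hform, mul_add, Finset.sum_add_distrib]

lemma hform_smul_right (c : ℂ) (x y : Fin (p+q) → ℂ) :
    hform p q x (c • y) = c * hform p q x y := by
  simp only [hform, Finset.mul_sum]
  refine Finset.sum_congr rfl fun i _ => ?_
  simp [Pi.smul_apply, smul_eq_mul]; ring

lemma hform_sum_right {ι : Type*} (s : Finset ι) (x : Fin (p+q) → ℂ)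
    (f : ι → Fin (p+q) → ℂ) :
    hform p q x (∑ j ∈ s, f j) = ∑ j ∈ s, hform p q x (f j) := by
  simp only [hform, Finset.sum_apply, Finset.mul_sum]
  exact Finset.sum_comm

lemma hform_add_left (x y z : Fin (p+q) → ℂ) :
    hform p q (x + y) z = hform p q x z + hform p q y z := by
  simp [hform, map_add, add_mul, mul_add, Finset.sum_add_distrib]

lemma hform_smul_left (c : ℂ) (x y : Fin (p+q) → ℂ) :
    hform p q (c • x) y = (starRingEnd ℂ) c * hform p q x y := by
  simp only [hform, Finset.mul_sum]
  refine Finset.sum_congr rfl fun i _ => ?_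
  simp [Pi.smul_apply, smul_eq_mul, _root_.map_mul]; ring

lemma hform_sum_left {ι : Type*} (s : Finset ι) (f : ι → Fin (p+q) → ℂ)
    (y : Fin (p+q) → ℂ) :
    hform p q (∑ j ∈ s, f j) y = ∑ j ∈ s, hform p q (f j) y := by
  simp only [hform, Finset.sum_apply, map_sum, _root_.map_mul, Finset.sum_mul, Finset.mul_sum]
  rw [Finset.sum_comm]

lemma hform_conj (x y : Fin (p+q) → ℂ) :
    hform p q y x = (starRingEnd ℂ) (hform p q x y) := by
  simp only [hform, map_sum, _root_.map_mul]
  refine Finset.sum_congr rfl fun i _ => ?_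
  split_ifs <;> simp <;> ring

lemma hform_expand (v : Fin p → (Fin (p+q) → ℂ)) (w : Fin q → (Fin (p+q) → ℂ))
    (hvv' : ∀ i i', hform p q (v i) (v i') = if i = i' then 1 else 0)
    (hww' : ∀ j j', hform p q (w j) (w j') = if j = j' then -1 else 0)
    (hvw' : ∀ i j, hform p q (v i) (w j) = 0)
    (hwv' : ∀ j i, hform p q (w j) (v i) = 0)
    (α γ : Fin p → ℂ) (β δ : Fin q → ℂ) :
    hform p q ((∑ i, α i • v i) + ∑ j, β j • w j)
      ((∑ i, γ i • v i) + ∑ j, δ j • w j)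
    = ∑ i, (starRingEnd ℂ) (α i) * γ i - ∑ j, (starRingEnd ℂ) (β j) * δ j := by
  simp only [hform_add_left, hform_sum_left, hform_smul_left, hform_add_right,
    hform_sum_right, hform_smul_right, hvv', hww', hvw', hwv',
    mul_ite, mul_one, mul_zero, mul_neg, mul_add, Finset.sum_add_distrib]
  simp [Finset.sum_ite_eq, Finset.mul_sum, mul_ite]
  rw [← sub_eq_add_neg]
  congr 1 <;> exact Finset.sum_congr rfl (fun _ _ => mul_comm _ _)

lemma re_sum_conj {n : ℕ} (c : Fin n → ℂ) (r : Fin n → ℝ) :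
    (∑ i, (starRingEnd ℂ) (c i) * (c i * (r i : ℂ))).re
      = ∑ i, Complex.normSq (c i) * r i := by
  rw [Complex.re_sum]
  refine Finset.sum_congr rfl fun i _ => ?_
  simp [Complex.mul_re, Complex.mul_im, Complex.normSq_apply]
  ring

lemma re_sum_conj_self {n : ℕ} (c : Fin n → ℂ) :
    (∑ i, (starRingEnd ℂ) (c i) * c i).re = ∑ i, Complex.normSq (c i) := by
  rw [Complex.re_sum]
  refine Finset.sum_congr rfl fun i _ => ?_
  simp [Complex.mul_re, Complex.normSq_apply]

lemma mulVec_sum' {m n : ℕ} {ι : Type*} (s : Finset ι)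
    (A : Matrix (Fin m) (Fin n) ℂ) (f : ι → Fin n → ℂ) :
    A.mulVec (∑ j ∈ s, f j) = ∑ j ∈ s, A.mulVec (f j) := by
  ext k
  simp only [Matrix.mulVec, dotProduct, Finset.sum_apply, Finset.mul_sum]
  exact Finset.sum_comm

end helpers

/-- Min/max characterization of the extreme eigenvalues of a J_{p,q}-Hermitian
matrix with a J-orthonormal eigenbasis of timelike eigenvectors v₁,…,v_p
(eigenvalues λ₁ ≤ ⋯ ≤ λ_p) and spacelike eigenvectors w₁,…,w_q
(eigenvalues μ₁ ≤ ⋯ ≤ μ_q), with μ_q ≤ λ₁: the Rayleigh quotient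
`R_A(x) = ⟨x,Ax⟩/⟨x,x⟩` attains its minimum λ₁ over timelike x at v₁, and its
maximum μ_q over spacelike x at w_q. -/

theorem rayleigh_min_timelike_max_spacelike
    (p q : ℕ) (hp : 0 < p) (hq : 0 < q)
    (A : Matrix (Fin (p + q)) (Fin (p + q)) ℂ)
    (hA : Aᴴ * Jmat p q = Jmat p q * A)
    (v : Fin p → (Fin (p + q) → ℂ)) (lam : Fin p → ℝ)
    (w : Fin q → (Fin (p + q) → ℂ)) (mu : Fin q → ℝ)
    (hv : ∀ i, A.mulVec (v i) = (lam i : ℂ) • v i)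
    (hw : ∀ j, A.mulVec (w j) = (mu j : ℂ) • w j)
    (hlam : Monotone lam) (hmu : Monotone mu)
    (hvnorm : ∀ i, hform p q (v i) (v i) = 1)
    (hwnorm : ∀ j, hform p q (w j) (w j) = -1)
    (hvv : ∀ i i', i ≠ i' → hform p q (v i) (v i') = 0)
    (hww : ∀ j j', j ≠ j' → hform p q (w j) (w j') = 0)
    (hvw : ∀ i j, hform p q (v i) (w j) = 0)
    (hbasis : ∀ x : Fin (p + q) → ℂ, ∃ (α : Fin p → ℂ) (β : Fin q → ℂ),
      x = (∑ i, α i • v i) + ∑ j, β j • w j)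
    (hadm : mu ⟨q - 1, by omega⟩ ≤ lam ⟨0, hp⟩) :
    (∀ x : Fin (p + q) → ℂ, 0 < (hform p q x x).re →
        lam ⟨0, hp⟩ ≤ (hform p q x (A.mulVec x)).re / (hform p q x x).re) ∧
    (hform p q (v ⟨0, hp⟩) (A.mulVec (v ⟨0, hp⟩))).re
        / (hform p q (v ⟨0, hp⟩) (v ⟨0, hp⟩)).re = lam ⟨0, hp⟩ ∧
    (∀ x : Fin (p + q) → ℂ, (hform p q x x).re < 0 →
        (hform p q x (A.mulVec x)).re / (hform p q x x).re ≤ mu ⟨q - 1, by omega⟩) ∧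
    (hform p q (w ⟨q - 1, by omega⟩) (A.mulVec (w ⟨q - 1, by omega⟩))).re
        / (hform p q (w ⟨q - 1, by omega⟩) (w ⟨q - 1, by omega⟩)).re
      = mu ⟨q - 1, by omega⟩ := by
  have hvv' : ∀ i i', hform p q (v i) (v i') = if i = i' then 1 else 0 := by
    intro i i'; by_cases h : i = i'
    · subst h; simp [hvnorm]
    · simp [h, hvv i i' h]
  have hww' : ∀ j j', hform p q (w j) (w j') = if j = j' then -1 else 0 := by
    intro j j'; by_cases h : j = j'
    · subst h; simp [hwnorm]
    · simp [h, hww j j' h]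
  have hwv' : ∀ j i, hform p q (w j) (v i) = 0 := fun j i => by
    rw [hform_conj]; simp [hvw]
  set i0 : Fin p := ⟨0, hp⟩
  set j1 : Fin q := ⟨q - 1, by omega⟩
  have hl0 : ∀ i, lam i0 ≤ lam i := fun i => hlam (by simp [Fin.le_def, i0])
  have hm1 : ∀ j, mu j ≤ mu j1 := fun j => hmu (by simp [Fin.le_def, j1]; omega)
  -- key decomposition
  have key : ∀ x : Fin (p + q) → ℂ, ∃ (a : Fin p → ℝ) (b : Fin q → ℝ),
      (∀ i, 0 ≤ a i) ∧ (∀ j, 0 ≤ b j) ∧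
      (hform p q x x).re = ∑ i, a i - ∑ j, b j ∧
      (hform p q x (A.mulVec x)).re = ∑ i, a i * lam i - ∑ j, b j * mu j := by
    intro x
    obtain ⟨α, β, hx⟩ := hbasis x
    refine ⟨fun i => Complex.normSq (α i), fun j => Complex.normSq (β j),
      fun i => Complex.normSq_nonneg _, fun j => Complex.normSq_nonneg _, ?_, ?_⟩
    · rw [hx, hform_expand v w hvv' hww' hvw hwv' α α β β]
      simp [Complex.sub_re, re_sum_conj_self, Complex.normSq_apply]
    · have hAx : A.mulVec x = (∑ i, (α i * (lam i : ℂ)) • v i)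
          + ∑ j, (β j * (mu j : ℂ)) • w j := by
        rw [hx, Matrix.mulVec_add, mulVec_sum', mulVec_sum']
        congr 1
        · refine Finset.sum_congr rfl fun i _ => ?_
          rw [Matrix.mulVec_smul, hv, smul_smul]
        · refine Finset.sum_congr rfl fun j _ => ?_
          rw [Matrix.mulVec_smul, hw, smul_smul]
      rw [hAx, hx, hform_expand v w hvv' hww' hvw hwv' α _ β _]
      simp only [Complex.sub_re]
      rw [re_sum_conj, re_sum_conj]
  refine ⟨?_, ?_, ?_, ?_⟩
  · intro x hx
    obtain ⟨a, b, ha, hb, hS, hN⟩ := key x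
    rw [le_div_iff₀ hx, hS, hN]
    calc lam i0 * (∑ i, a i - ∑ j, b j)
        = ∑ i, lam i0 * a i - ∑ j, lam i0 * b j := by
          rw [mul_sub, Finset.mul_sum, Finset.mul_sum]
      _ ≤ ∑ i, a i * lam i - ∑ j, b j * mu j := by
          refine sub_le_sub (Finset.sum_le_sum fun i _ => ?_)
            (Finset.sum_le_sum fun j _ => ?_)
          · rw [mul_comm]; exact mul_le_mul_of_nonneg_left (hl0 i) (ha i)
          · rw [mul_comm (lam i0) (b j)]
            exact mul_le_mul_of_nonneg_left (le_trans (hm1 j) hadm) (hb j)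
  · have h1 : hform p q (v i0) (A.mulVec (v i0)) = (lam i0 : ℂ) := by
      rw [hv, hform_smul_right, hvnorm, mul_one]
    rw [h1, hvnorm i0]
    simp
  · intro x hx
    obtain ⟨a, b, ha, hb, hS, hN⟩ := key x
    rw [div_le_iff_of_neg hx, hS, hN]
    calc mu j1 * (∑ i, a i - ∑ j, b j)
        = ∑ i, mu j1 * a i - ∑ j, mu j1 * b j := by
          rw [mul_sub, Finset.mul_sum, Finset.mul_sum]
      _ ≤ ∑ i, a i * lam i - ∑ j, b j * mu j := by
          refine sub_le_sub (Finset.sum_le_sum fun i _ => ?_)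
            (Finset.sum_le_sum fun j _ => ?_)
          · rw [mul_comm]
            exact mul_le_mul_of_nonneg_left (le_trans hadm (hl0 i)) (ha i)
          · rw [mul_comm (mu j1) (b j)]
            exact mul_le_mul_of_nonneg_left (hm1 j) (hb j)
  · have h1 : hform p q (w j1) (A.mulVec (w j1)) = -(mu j1 : ℂ) := by
      rw [hw, hform_smul_right, hwnorm]; ring
    rw [h1, hwnorm j1]
    simp
end

section
/- Interlacing for pseudo-Hermitian truncation: let n = p+q with p ≥ q ≥ 1, let A be an n×n complex J_{p,q}-Hermitian matrix with a J-orthonormal eigenbasis of p timelike eigenvectors (real eigenvalues λ₁ ≤ ⋯ ≤ λ_p) and q spacelike eigenvectors (real eigenvalues μ₁ ≤ ⋯ ≤ μ_q), with μ_q < λ₁ (admissibility). Let A' be the upper-left (n−1)×(n−1) principal submatrix of A, and suppose A' is J_{p,q−1}-Hermitian with a J-orthonormal eigenbasis of p timelike eigenvectors (real eigenvalues λ'₁ ≤ ⋯ ≤ λ'_p) and q−1 spacelike eigenvectors (real eigenvalues μ'₁ ≤ ⋯ ≤ μ'_{q−1}). Then: μᵢ ≤ μ'ᵢ ≤ μ_{i+1}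 for 1 ≤ i ≤ q−1; λⱼ ≤ λ'ⱼ ≤ λ_{j+1} for 1 ≤ j ≤ p−1; and λ'_p ≥ λ_p. -/
open Matrix

open Finset

noncomputable def dform {n : ℕ} (g : Fin n → ℂ) (x y : Fin n → ℂ) : ℂ :=
  ∑ i, g i * (starRingEnd ℂ) (x i) * y i

lemma dform_conj {n : ℕ} {g : Fin n → ℂ} (hg : ∀ i, (starRingEnd ℂ) (g i) = g i)
    (x y : Fin n → ℂ) : (starRingEnd ℂ) (dform g x y) = dform g y x := by
  simp only [dform, map_sum, _root_.map_mul, hg, Complex.conj_conj]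
  exact Finset.sum_congr rfl fun i _ => by ring

lemma dform_sum_right {n : ℕ} (g : Fin n → ℂ) {κ : Type} [Fintype κ]
    (x : Fin n → ℂ) (d : κ → ℂ) (f : κ → (Fin n → ℂ)) :
    dform g x (∑ l, d l • f l) = ∑ l, d l * dform g x (f l) := by
  simp only [dform, Finset.sum_apply, Pi.smul_apply, smul_eq_mul, Finset.mul_sum]
  rw [Finset.sum_comm]
  exact Finset.sum_congr rfl fun l _ => Finset.sum_congr rfl fun i _ => by ring

lemma dform_sum_left {n : ℕ} (g : Fin n → ℂ) {ι : Type} [Fintype ι]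
    (a : ι → ℂ) (e : ι → (Fin n → ℂ)) (y : Fin n → ℂ) :
    dform g (∑ k, a k • e k) y = ∑ k, (starRingEnd ℂ) (a k) * dform g (e k) y := by
  simp only [dform, Finset.sum_apply, Pi.smul_apply, smul_eq_mul, map_sum, _root_.map_mul,
    Finset.mul_sum, Finset.sum_mul]
  rw [Finset.sum_comm]
  exact Finset.sum_congr rfl fun k _ => Finset.sum_congr rfl fun i _ => by ring

lemma dform_sum_sum {n : ℕ} (g : Fin n → ℂ) {ι κ : Type} [Fintype ι] [Fintype κ]
    (a : ι → ℂ) (e : ι → (Fin n → ℂ)) (d : κ → ℂ) (f : κ → (Fin n → ℂ)) :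
    dform g (∑ k, a k • e k) (∑ l, d l • f l)
      = ∑ k, ∑ l, (starRingEnd ℂ) (a k) * d l * dform g (e k) (f l) := by
  rw [dform_sum_right]
  simp only [dform_sum_left, Finset.mul_sum]
  rw [Finset.sum_comm]
  exact Finset.sum_congr rfl fun k _ => Finset.sum_congr rfl fun l _ => by ring

lemma dform_expand {n : ℕ} (g : Fin n → ℂ) {ι : Type} [Fintype ι] [DecidableEq ι]
    (e : ι → (Fin n → ℂ)) (ε : ι → ℝ)
    (horth : ∀ k l, k ≠ l → dform g (e k) (e l) = 0)
    (hnorm : ∀ k, dform g (e k) (e k) = (ε k : ℂ))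
    (a d : ι → ℂ) :
    dform g (∑ k, a k • e k) (∑ l, d l • e l)
      = ∑ k, (starRingEnd ℂ) (a k) * d k * (ε k : ℂ) := by
  rw [dform_sum_sum]
  refine Finset.sum_congr rfl fun k _ => ?_
  rw [Finset.sum_eq_single k]
  · rw [hnorm]
  · intro l _ hlk
    rw [horth k l (Ne.symm hlk), mul_zero]
  · intro h; exact absurd (mem_univ k) h

lemma mulVec_sum_eigen {n : ℕ} (A : Matrix (Fin n) (Fin n) ℂ) {ι : Type} [Fintype ι]
    (e : ι → (Fin n → ℂ)) (ν : ι → ℝ)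
    (heig : ∀ k, A.mulVec (e k) = (ν k : ℂ) • e k) (a : ι → ℂ) :
    A.mulVec (∑ k, a k • e k) = ∑ k, (a k * (ν k : ℂ)) • e k := by
  have : A.mulVec (∑ k, a k • e k) = ∑ k, a k • (A.mulVec (e k)) := by
    simp only [← Matrix.mulVecLin_apply, map_sum, LinearMap.map_smul]
  rw [this]
  exact Finset.sum_congr rfl fun k _ => by rw [heig, smul_smul]

lemma snoc_zero_eval {m : ℕ} (x : Fin m → ℂ) (i : Fin m) :
    (Fin.snoc x 0 : Fin (m+1) → ℂ) i.castSucc = x i := Fin.snoc_castSucc _ _ _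

lemma dform_snoc {m : ℕ} (g : Fin (m+1) → ℂ) (g' : Fin m → ℂ)
    (hgg' : ∀ i : Fin m, g i.castSucc = g' i) (x y : Fin m → ℂ) :
    dform g (Fin.snoc x 0) (Fin.snoc y 0) = dform g' x y := by
  simp only [dform, Fin.sum_univ_castSucc, Fin.snoc_last, Fin.snoc_castSucc, hgg',
    mul_zero, add_zero]

lemma mulVec_snoc_castSucc {m : ℕ} (A : Matrix (Fin (m+1)) (Fin (m+1)) ℂ)
    (A' : Matrix (Fin m) (Fin m) ℂ)
    (hA'def : ∀ i j, A' i j = A i.castSucc j.castSucc) (x : Fin m → ℂ) (i : Fin m) :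
    (A.mulVec (Fin.snoc x 0)) i.castSucc = (A'.mulVec x) i := by
  simp only [Matrix.mulVec, dotProduct, Fin.sum_univ_castSucc, Fin.snoc_last,
    Fin.snoc_castSucc, mul_zero, add_zero]
  exact Finset.sum_congr rfl fun j _ => by rw [hA'def]

lemma dform_mulVec_snoc {m : ℕ} (g : Fin (m+1) → ℂ) (g' : Fin m → ℂ)
    (hgg' : ∀ i : Fin m, g i.castSucc = g' i)
    (A : Matrix (Fin (m+1)) (Fin (m+1)) ℂ) (A' : Matrix (Fin m) (Fin m) ℂ)
    (hA'def : ∀ i j, A' i j = A i.castSucc j.castSucc) (x y : Fin m → ℂ) :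
    dform g (A.mulVec (Fin.snoc x 0)) (Fin.snoc y 0) = dform g' (A'.mulVec x) y := by
  simp only [dform, Fin.sum_univ_castSucc, Fin.snoc_last, Fin.snoc_castSucc, mul_zero, add_zero]
  exact Finset.sum_congr rfl fun i _ => by
    rw [hgg', mulVec_snoc_castSucc A A' hA'def]

lemma li_of_orth {n : ℕ} (g : Fin n → ℂ) {ι : Type} [Fintype ι] [DecidableEq ι]
    (e : ι → (Fin n → ℂ)) (ε : ι → ℝ)
    (horth : ∀ k l, k ≠ l → dform g (e k) (e l) = 0)
    (hnorm : ∀ k, dform g (e k) (e k) = (ε k : ℂ))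
    (hne : ∀ k, ε k ≠ 0) : LinearIndependent ℂ e := by
  rw [Fintype.linearIndependent_iff]
  intro d hd k
  have h0 : dform g (e k) (∑ l, d l • e l) = d k * (ε k : ℂ) := by
    rw [dform_sum_right]
    rw [Finset.sum_eq_single k]
    · rw [hnorm]
    · intro l _ hlk; rw [horth k l (Ne.symm hlk), mul_zero]
    · intro h; exact absurd (Finset.mem_univ k) h
  rw [hd] at h0
  have : dform g (e k) 0 = 0 := by simp [dform]
  rw [this] at h0
  rcases mul_eq_zero.mp h0.symm with h | h
  · exact h
  · exact absurd (by exact_mod_cast h) (hne k)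

lemma sum_snoc {m : ℕ} {ι' : Type} [Fintype ι'] (d : ι' → ℂ) (u : ι' → (Fin m → ℂ)) :
    ∑ k, d k • (Fin.snoc (u k) 0 : Fin (m+1) → ℂ) = Fin.snoc (∑ k, d k • u k) 0 := by
  funext i
  refine Fin.lastCases ?_ ?_ i
  · simp [Finset.sum_apply, Fin.snoc_last]
  · intro j
    simp [Finset.sum_apply, Fin.snoc_castSucc]

lemma master_core {m : ℕ} (g : Fin (m+1) → ℂ) (g' : Fin m → ℂ)
    (hgg' : ∀ i : Fin m, g i.castSucc = g' i)
    (A : Matrix (Fin (m+1)) (Fin (m+1)) ℂ) (A' : Matrix (Fin m) (Fin m) ℂ)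
    (hA'def : ∀ i j, A' i j = A i.castSucc j.castSucc)
    {ι ι' : Type} [Fintype ι] [Fintype ι'] [DecidableEq ι] [DecidableEq ι']
    (e : ι → (Fin (m+1) → ℂ)) (ν ε : ι → ℝ)
    (e' : ι' → (Fin m → ℂ)) (ν' ε' : ι' → ℝ)
    (heig : ∀ k, A.mulVec (e k) = ((ν k : ℂ)) • e k)
    (horth : ∀ k l, k ≠ l → dform g (e k) (e l) = 0)
    (hnorm : ∀ k, dform g (e k) (e k) = (ε k : ℂ))
    (hεne : ∀ k, ε k ≠ 0)
    (heig' : ∀ k, A'.mulVec (e' k) = ((ν' k : ℂ)) • e' k)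
    (horth' : ∀ k l, k ≠ l → dform g' (e' k) (e' l) = 0)
    (hnorm' : ∀ k, dform g' (e' k) (e' k) = (ε' k : ℂ))
    (hεne' : ∀ k, ε' k ≠ 0)
    (hcard : m + 1 < Fintype.card ι + Fintype.card ι') :
    ∃ (γ : ι → ℝ) (γ' : ι' → ℝ),
      (∀ k, 0 ≤ γ k) ∧ (∀ k, 0 ≤ γ' k) ∧ (∃ k, γ k ≠ 0) ∧ (∃ k, γ' k ≠ 0) ∧
      (∑ k, ε k * γ k = ∑ k, ε' k * γ' k) ∧
      (∑ k, ν k * ε k * γ k = ∑ k, ν' k * ε' k * γ' k) := by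
  classical
  have hLI : LinearIndependent ℂ e := li_of_orth g e ε horth hnorm hεne
  have hLI' : LinearIndependent ℂ e' := li_of_orth g' e' ε' horth' hnorm' hεne'
  set f' : ι' → (Fin (m+1) → ℂ) := fun k => Fin.snoc (e' k) 0 with hf'
  have hLIf' : LinearIndependent ℂ f' := by
    rw [Fintype.linearIndependent_iff] at hLI' ⊢
    intro d hd
    apply hLI'
    rw [sum_snoc] at hd
    funext i
    have := congrFun hd i.castSucc
    rwa [Fin.snoc_castSucc] at this
  set S : Submodule ℂ (Fin (m+1) → ℂ) := Submodule.span ℂ (Set.range e) with hS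
  set S' : Submodule ℂ (Fin (m+1) → ℂ) := Submodule.span ℂ (Set.range f') with hS'
  have hrank : Module.finrank ℂ S = Fintype.card ι := finrank_span_eq_card hLI
  have hrank' : Module.finrank ℂ S' = Fintype.card ι' := finrank_span_eq_card hLIf'
  have hbot : S ⊓ S' ≠ ⊥ := by
    intro hb
    have h1 := Submodule.finrank_sup_add_finrank_inf_eq S S'
    rw [hb, finrank_bot, add_zero, hrank, hrank'] at h1
    have h2 : Module.finrank ℂ ↥(S ⊔ S') ≤ m + 1 := by
      have := Submodule.finrank_le (S ⊔ S')
      rwa [Module.finrank_fintype_fun_eq_card, Fintype.card_fin] at this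
    omega
  obtain ⟨x, hx, hx0⟩ := Submodule.ne_bot_iff _ |>.mp hbot
  obtain ⟨hxS, hxS'⟩ := Submodule.mem_inf.mp hx
  obtain ⟨a, ha⟩ := (Submodule.mem_span_range_iff_exists_fun ℂ).mp hxS
  obtain ⟨d, hd⟩ := (Submodule.mem_span_range_iff_exists_fun ℂ).mp hxS'
  set x' : Fin m → ℂ := ∑ k, d k • e' k with hx'
  have hxsnoc : x = Fin.snoc x' 0 := by rw [← hd, hf', sum_snoc]
  refine ⟨fun k => Complex.normSq (a k), fun k => Complex.normSq (d k),
    fun k => Complex.normSq_nonneg _, fun k => Complex.normSq_nonneg _, ?_, ?_, ?_, ?_⟩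
  · by_contra hall
    push_neg at hall
    apply hx0
    rw [← ha]
    refine Finset.sum_eq_zero fun k _ => ?_
    rw [Complex.normSq_eq_zero.mp (hall k), zero_smul]
  · by_contra hall
    push_neg at hall
    apply hx0
    rw [← hd]
    refine Finset.sum_eq_zero fun k _ => ?_
    rw [Complex.normSq_eq_zero.mp (hall k), zero_smul]
  · -- B equality
    have h1 : dform g x x = ((∑ k, ε k * Complex.normSq (a k) : ℝ) : ℂ) := by
      rw [← ha, dform_expand g e ε horth hnorm]
      push_cast [Complex.normSq_eq_conj_mul_self]
      exact Finset.sum_congr rfl fun k _ => by (try simp only [_root_.map_mul, Complex.conj_ofReal]); ring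
    have h2 : dform g x x = ((∑ k, ε' k * Complex.normSq (d k) : ℝ) : ℂ) := by
      rw [hxsnoc, dform_snoc g g' hgg', hx', dform_expand g' e' ε' horth' hnorm']
      push_cast [Complex.normSq_eq_conj_mul_self]
      exact Finset.sum_congr rfl fun k _ => by (try simp only [_root_.map_mul, Complex.conj_ofReal]); ring
    exact_mod_cast h1.symm.trans h2
  · -- QA equality
    have h1 : dform g (A.mulVec x) x
        = ((∑ k, ν k * ε k * Complex.normSq (a k) : ℝ) : ℂ) := by
      rw [← ha, mulVec_sum_eigen A e ν heig, dform_expand g e ε horth hnorm]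
      push_cast [Complex.normSq_eq_conj_mul_self]
      exact Finset.sum_congr rfl fun k _ => by (try simp only [_root_.map_mul, Complex.conj_ofReal]); ring
    have h2 : dform g (A.mulVec x) x
        = ((∑ k, ν' k * ε' k * Complex.normSq (d k) : ℝ) : ℂ) := by
      rw [hxsnoc, dform_mulVec_snoc g g' hgg' A A' hA'def, hx',
        mulVec_sum_eigen A' e' ν' heig', dform_expand g' e' ε' horth' hnorm']
      push_cast [Complex.normSq_eq_conj_mul_self]
      exact Finset.sum_congr rfl fun k _ => by (try simp only [_root_.map_mul, Complex.conj_ofReal]); ring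
    exact_mod_cast h1.symm.trans h2

lemma real_interlace {ι ι' : Type} [Fintype ι] [Fintype ι']
    (ν ε γ : ι → ℝ) (ν' ε' γ' : ι' → ℝ) (c s s' : ℝ)
    (hγ : ∀ k, 0 ≤ γ k) (hγ' : ∀ k, 0 ≤ γ' k)
    (hB : ∑ k, ε k * γ k = ∑ k, ε' k * γ' k)
    (hQA : ∑ k, ν k * ε k * γ k = ∑ k, ν' k * ε' k * γ' k)
    (hpos : ∀ k, 0 < ε k * (ν k - c)) (hsome : ∃ k, γ k ≠ 0)
    (hup : ∀ k, 0 ≤ ε k * (s * (ν k - c) - 1))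
    (hlow : ∀ k, 0 ≤ ε' k * (1 - s' * (ν' k - c))) :
    s' ≤ s := by
  set Q : ℝ := ∑ k, ε k * (ν k - c) * γ k with hQ
  have hQ' : Q = ∑ k, ε' k * (ν' k - c) * γ' k := by
    have e1 : Q = (∑ k, ν k * ε k * γ k) - c * ∑ k, ε k * γ k := by
      rw [hQ, Finset.mul_sum, ← Finset.sum_sub_distrib]
      exact Finset.sum_congr rfl fun k _ => by ring
    have e2 : (∑ k, ε' k * (ν' k - c) * γ' k)
        = (∑ k, ν' k * ε' k * γ' k) - c * ∑ k, ε' k * γ' k := by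
      rw [Finset.mul_sum, ← Finset.sum_sub_distrib]
      exact Finset.sum_congr rfl fun k _ => by ring
    rw [e1, e2, hB, hQA]
  have hQpos : 0 < Q := by
    obtain ⟨k0, hk0⟩ := hsome
    refine Finset.sum_pos' (fun k _ => mul_nonneg (le_of_lt (hpos k)) (hγ k)) ⟨k0, Finset.mem_univ _, ?_⟩
    exact mul_pos (hpos k0) (lt_of_le_of_ne (hγ k0) (Ne.symm hk0))
  have hBle : ∑ k, ε k * γ k ≤ s * Q := by
    have : s * Q - ∑ k, ε k * γ k = ∑ k, (ε k * (s * (ν k - c) - 1)) * γ k := by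
      rw [hQ, Finset.mul_sum, ← Finset.sum_sub_distrib]
      exact Finset.sum_congr rfl fun k _ => by ring
    nlinarith [Finset.sum_nonneg (fun k (_ : k ∈ Finset.univ) => mul_nonneg (hup k) (hγ k)), this]
  have hBge : s' * Q ≤ ∑ k, ε k * γ k := by
    rw [hB]
    have : (∑ k, ε' k * γ' k) - s' * Q = ∑ k, (ε' k * (1 - s' * (ν' k - c))) * γ' k := by
      rw [hQ', Finset.mul_sum, ← Finset.sum_sub_distrib]
      exact Finset.sum_congr rfl fun k _ => by ring
    nlinarith [Finset.sum_nonneg (fun k (_ : k ∈ Finset.univ) => mul_nonneg (hlow k) (hγ' k)), this]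
  have := hBge.trans hBle
  exact le_of_mul_le_mul_right (by linarith [this]) hQpos

lemma masterB {m : ℕ} (g : Fin (m+1) → ℂ) (g' : Fin m → ℂ)
    (hgg' : ∀ i : Fin m, g i.castSucc = g' i)
    (A : Matrix (Fin (m+1)) (Fin (m+1)) ℂ) (A' : Matrix (Fin m) (Fin m) ℂ)
    (hA'def : ∀ i j, A' i j = A i.castSucc j.castSucc)
    {ι ι' : Type} [Fintype ι] [Fintype ι'] [DecidableEq ι] [DecidableEq ι']
    (e : ι → (Fin (m+1) → ℂ)) (ν ε : ι → ℝ)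
    (e' : ι' → (Fin m → ℂ)) (ν' ε' : ι' → ℝ)
    (heig : ∀ k, A.mulVec (e k) = ((ν k : ℂ)) • e k)
    (horth : ∀ k l, k ≠ l → dform g (e k) (e l) = 0)
    (hnorm : ∀ k, dform g (e k) (e k) = (ε k : ℂ))
    (hεne : ∀ k, ε k ≠ 0)
    (heig' : ∀ k, A'.mulVec (e' k) = ((ν' k : ℂ)) • e' k)
    (horth' : ∀ k l, k ≠ l → dform g' (e' k) (e' l) = 0)
    (hnorm' : ∀ k, dform g' (e' k) (e' k) = (ε' k : ℂ))
    (hεne' : ∀ k, ε' k ≠ 0)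
    (hcard : m + 1 < Fintype.card ι + Fintype.card ι')
    (c s s' : ℝ)
    (hpos : ∀ k, 0 < ε k * (ν k - c))
    (hup : ∀ k, 0 ≤ ε k * (s * (ν k - c) - 1))
    (hlow : ∀ k, 0 ≤ ε' k * (1 - s' * (ν' k - c))) :
    s' ≤ s := by
  obtain ⟨γ, γ', hγ, hγ', hsome, _, hB, hQA⟩ :=
    master_core g g' hgg' A A' hA'def e ν ε e' ν' ε' heig horth hnorm hεne
      heig' horth' hnorm' hεne' hcard
  exact real_interlace ν ε γ ν' ε' γ' c s s' hγ hγ' hB hQA hpos hsome hup hlow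

lemma masterA {m : ℕ} (g : Fin (m+1) → ℂ) (g' : Fin m → ℂ)
    (hgg' : ∀ i : Fin m, g i.castSucc = g' i)
    (A : Matrix (Fin (m+1)) (Fin (m+1)) ℂ) (A' : Matrix (Fin m) (Fin m) ℂ)
    (hA'def : ∀ i j, A' i j = A i.castSucc j.castSucc)
    {ι ι' : Type} [Fintype ι] [Fintype ι'] [DecidableEq ι] [DecidableEq ι']
    (e : ι → (Fin (m+1) → ℂ)) (ν ε : ι → ℝ)
    (e' : ι' → (Fin m → ℂ)) (ν' ε' : ι' → ℝ)
    (heig : ∀ k, A.mulVec (e k) = ((ν k : ℂ)) • e k)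
    (horth : ∀ k l, k ≠ l → dform g (e k) (e l) = 0)
    (hnorm : ∀ k, dform g (e k) (e k) = (ε k : ℂ))
    (hεne : ∀ k, ε k ≠ 0)
    (heig' : ∀ k, A'.mulVec (e' k) = ((ν' k : ℂ)) • e' k)
    (horth' : ∀ k l, k ≠ l → dform g' (e' k) (e' l) = 0)
    (hnorm' : ∀ k, dform g' (e' k) (e' k) = (ε' k : ℂ))
    (hεne' : ∀ k, ε' k ≠ 0)
    (hcard : m + 1 < Fintype.card ι + Fintype.card ι')
    (c s s' : ℝ)
    (hpos' : ∀ k, 0 < ε' k * (ν' k - c))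
    (hup' : ∀ k, 0 ≤ ε' k * (s * (ν' k - c) - 1))
    (hlow : ∀ k, 0 ≤ ε k * (1 - s' * (ν k - c))) :
    s' ≤ s := by
  obtain ⟨γ, γ', hγ, hγ', _, hsome', hB, hQA⟩ :=
    master_core g g' hgg' A A' hA'def e ν ε e' ν' ε' heig horth hnorm hεne
      heig' horth' hnorm' hεne' hcard
  exact real_interlace ν' ε' γ' ν ε γ c s s' hγ' hγ hB.symm hQA.symm hpos' hsome' hup' hlow

section helpers
variable {a b c : ℝ}

lemma H1 (hcb : c < b) (hba : b ≤ a) : 0 ≤ (1:ℝ) * ((b - c)⁻¹ * (a - c) - 1) := by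
  have h1 : (0:ℝ) < b - c := by linarith
  have h2 := mul_inv_cancel₀ (ne_of_gt h1)
  have h3 : (0:ℝ) < (b - c)⁻¹ := inv_pos.mpr h1
  nlinarith

lemma H2 (hcb : c < b) (hac : a < c) : 0 ≤ (-1:ℝ) * ((b - c)⁻¹ * (a - c) - 1) := by
  have h1 : (0:ℝ) < b - c := by linarith
  have h3 : (0:ℝ) < (b - c)⁻¹ := inv_pos.mpr h1
  nlinarith

lemma H3 (hbc : b < c) (hab : a ≤ b) : 0 ≤ (-1:ℝ) * (1 - (b - c)⁻¹ * (a - c)) := by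
  have h1 : b - c < 0 := by linarith
  have h2 := mul_inv_cancel₀ (ne_of_lt h1)
  have h3 : (b - c)⁻¹ < 0 := inv_lt_zero.mpr h1
  nlinarith

lemma H4 (hbc : b < c) (hca : c < a) : 0 ≤ (1:ℝ) * (1 - (b - c)⁻¹ * (a - c)) := by
  have h1 : b - c < 0 := by linarith
  have h3 : (b - c)⁻¹ < 0 := inv_lt_zero.mpr h1
  nlinarith

lemma H5 (hbc : b < c) (hba : b ≤ a) (hac : a < c) :
    0 ≤ (-1:ℝ) * ((b - c)⁻¹ * (a - c) - 1) := by
  have h1 : b - c < 0 := by linarith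
  have h2 := mul_inv_cancel₀ (ne_of_lt h1)
  have h3 : (b - c)⁻¹ < 0 := inv_lt_zero.mpr h1
  nlinarith

lemma H6 (hcb : c < b) (hab : a ≤ b) : 0 ≤ (1:ℝ) * (1 - (b - c)⁻¹ * (a - c)) := by
  have h1 : (0:ℝ) < b - c := by linarith
  have h2 := mul_inv_cancel₀ (ne_of_gt h1)
  have h3 : (0:ℝ) < (b - c)⁻¹ := inv_pos.mpr h1
  nlinarith

lemma H7 (hca : c < a) (hcb : c < b) (h : (a - c)⁻¹ ≤ (b - c)⁻¹) : b ≤ a := by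
  have h1 : (0:ℝ) < a - c := by linarith
  have h2 : (0:ℝ) < b - c := by linarith
  have h3 := mul_inv_cancel₀ (ne_of_gt h1)
  have h4 := mul_inv_cancel₀ (ne_of_gt h2)
  have h5 : (0:ℝ) < (a-c)⁻¹ := inv_pos.mpr h1
  have h6 : (0:ℝ) < (b-c)⁻¹ := inv_pos.mpr h2
  nlinarith

lemma H8 (hac : a < c) (hbc : b < c) (h : (a - c)⁻¹ ≤ (b - c)⁻¹) : b ≤ a := by
  have h1 : a - c < 0 := by linarith
  have h2 : b - c < 0 := by linarith
  have h3 := mul_inv_cancel₀ (ne_of_lt h1)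
  have h4 := mul_inv_cancel₀ (ne_of_lt h2)
  have h5 : (a-c)⁻¹ < 0 := inv_lt_zero.mpr h1
  have h6 : (b-c)⁻¹ < 0 := inv_lt_zero.mpr h2
  nlinarith

end helpers

lemma dform_smul_left' {n : ℕ} (g : Fin n → ℂ) (z : ℂ) (x y : Fin n → ℂ) :
    dform g (z • x) y = (starRingEnd ℂ) z * dform g x y := by
  simp only [dform, Pi.smul_apply, smul_eq_mul, _root_.map_mul, Finset.mul_sum]
  exact Finset.sum_congr rfl fun i _ => by ring

lemma prim_pos {m : ℕ} (g : Fin (m+1) → ℂ) (g' : Fin m → ℂ)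
    (hgg' : ∀ i : Fin m, g i.castSucc = g' i)
    (A : Matrix (Fin (m+1)) (Fin (m+1)) ℂ) (A' : Matrix (Fin m) (Fin m) ℂ)
    (hA'def : ∀ i j, A' i j = A i.castSucc j.castSucc)
    {ι : Type} [Fintype ι] [DecidableEq ι]
    (e : ι → (Fin (m+1) → ℂ)) (ν ε : ι → ℝ)
    (heig : ∀ k, A.mulVec (e k) = ((ν k : ℂ)) • e k)
    (horth : ∀ k l, k ≠ l → dform g (e k) (e l) = 0)
    (hnorm : ∀ k, dform g (e k) (e k) = (ε k : ℂ))
    (hbasis : ∀ x : Fin (m+1) → ℂ, ∃ co : ι → ℂ, x = ∑ k, co k • e k)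
    (c : ℝ) (hpos : ∀ k, 0 < ε k * (ν k - c))
    (y : Fin m → ℂ) (ν0 ε0 : ℝ)
    (hy : A'.mulVec y = ((ν0 : ℂ)) • y) (hn : dform g' y y = (ε0 : ℂ))
    (hε0 : ε0 ≠ 0) : 0 < ε0 * (ν0 - c) := by
  have hy0 : y ≠ 0 := by
    intro h
    rw [h] at hn
    simp only [dform, Pi.zero_apply, map_zero, mul_zero, zero_mul, Finset.sum_const_zero] at hn
    exact hε0 (by exact_mod_cast hn.symm)
  set x : Fin (m+1) → ℂ := Fin.snoc y 0 with hx
  have hx0 : x ≠ 0 := by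
    intro h
    apply hy0
    funext i
    have := congrFun h i.castSucc
    rwa [hx, Fin.snoc_castSucc] at this
  obtain ⟨co, hco⟩ := hbasis x
  have e1 : dform g x x = ((∑ k, ε k * Complex.normSq (co k) : ℝ) : ℂ) := by
    rw [hco, dform_expand g e ε horth hnorm]
    push_cast [Complex.normSq_eq_conj_mul_self]
    exact Finset.sum_congr rfl fun k _ => by ring
  have e2 : dform g (A.mulVec x) x
      = ((∑ k, ν k * ε k * Complex.normSq (co k) : ℝ) : ℂ) := by
    rw [hco, mulVec_sum_eigen A e ν heig, dform_expand g e ε horth hnorm]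
    push_cast [Complex.normSq_eq_conj_mul_self]
    exact Finset.sum_congr rfl fun k _ => by
      simp only [_root_.map_mul, Complex.conj_ofReal]; ring
  have e3 : dform g x x = ((ε0 : ℝ) : ℂ) := by
    rw [hx, dform_snoc g g' hgg', hn]
  have e4 : dform g (A.mulVec x) x = ((ν0 * ε0 : ℝ) : ℂ) := by
    rw [hx, dform_mulVec_snoc g g' hgg' A A' hA'def, hy, dform_smul_left', hn,
      Complex.conj_ofReal]
    push_cast; ring
  have rB : ∑ k, ε k * Complex.normSq (co k) = ε0 := by
    exact_mod_cast e1.symm.trans e3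
  have rQA : ∑ k, ν k * ε k * Complex.normSq (co k) = ν0 * ε0 := by
    exact_mod_cast e2.symm.trans e4
  have hsome : ∃ k, Complex.normSq (co k) ≠ 0 := by
    by_contra hall
    push_neg at hall
    apply hx0
    rw [hco]
    exact Finset.sum_eq_zero fun k _ =>
      by rw [Complex.normSq_eq_zero.mp (hall k), zero_smul]
  have hQpos : 0 < ∑ k, ε k * (ν k - c) * Complex.normSq (co k) := by
    obtain ⟨k0, hk0⟩ := hsome
    refine Finset.sum_pos' (fun k _ => mul_nonneg (le_of_lt (hpos k)) (Complex.normSq_nonneg _))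
      ⟨k0, Finset.mem_univ _, mul_pos (hpos k0)
        (lt_of_le_of_ne (Complex.normSq_nonneg _) (Ne.symm hk0))⟩
  have hfin : ∑ k, ε k * (ν k - c) * Complex.normSq (co k)
      = (∑ k, ν k * ε k * Complex.normSq (co k)) - c * ∑ k, ε k * Complex.normSq (co k) := by
    rw [Finset.mul_sum, ← Finset.sum_sub_distrib]
    exact Finset.sum_congr rfl fun k _ => by ring
  rw [hfin, rB, rQA] at hQpos
  nlinarith
/-- Interlacing for pseudo-Hermitian truncation: if A is J_{p,q}-Hermitian
with a J-orthonormal eigenbasis (timelike eigenvalues λ₁ ≤ ⋯ ≤ λ_p, spacelike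
eigenvalues μ₁ ≤ ⋯ ≤ μ_q, admissible: μ_q < λ₁), and the upper-left
(n−1)×(n−1) principal submatrix A' is J_{p,q−1}-Hermitian with a
J-orthonormal eigenbasis (timelike eigenvalues λ'₁ ≤ ⋯ ≤ λ'_p, spacelike
eigenvalues μ'₁ ≤ ⋯ ≤ μ'_{q−1}), then
μᵢ ≤ μ'ᵢ ≤ μ_{i+1}, λⱼ ≤ λ'ⱼ ≤ λ_{j+1}, and λ'_p ≥ λ_p. -/
theorem pseudoHermitian_truncation_interlacing
    (p q : ℕ) (hq : 1 ≤ q) (hpq : q ≤ p)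
    (A : Matrix (Fin (p + q)) (Fin (p + q)) ℂ)
    (hA : Aᴴ * Jmat p q = Jmat p q * A)
    (v : Fin p → (Fin (p + q) → ℂ)) (lam : Fin p → ℝ)
    (w : Fin q → (Fin (p + q) → ℂ)) (mu : Fin q → ℝ)
    (hv : ∀ i, A.mulVec (v i) = (lam i : ℂ) • v i)
    (hw : ∀ j, A.mulVec (w j) = (mu j : ℂ) • w j)
    (hlam : Monotone lam) (hmu : Monotone mu)
    (hvnorm : ∀ i, hform p q (v i) (v i) = 1)
    (hwnorm : ∀ j, hform p q (w j) (w j) = -1)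
    (hvv : ∀ i i', i ≠ i' → hform p q (v i) (v i') = 0)
    (hww : ∀ j j', j ≠ j' → hform p q (w j) (w j') = 0)
    (hvw : ∀ i j, hform p q (v i) (w j) = 0)
    (hbasis : ∀ x : Fin (p + q) → ℂ, ∃ (α : Fin p → ℂ) (β : Fin q → ℂ),
      x = (∑ i, α i • v i) + ∑ j, β j • w j)
    (hadm : mu ⟨q - 1, by omega⟩ < lam ⟨0, by omega⟩)
    (A' : Matrix (Fin (p + (q - 1))) (Fin (p + (q - 1))) ℂ)
    (hA'def : A' = A.submatrix (Fin.castLE (by omega)) (Fin.castLE (by omega)))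
    (hA' : A'ᴴ * Jmat p (q - 1) = Jmat p (q - 1) * A')
    (v' : Fin p → (Fin (p + (q - 1)) → ℂ)) (lam' : Fin p → ℝ)
    (w' : Fin (q - 1) → (Fin (p + (q - 1)) → ℂ)) (mu' : Fin (q - 1) → ℝ)
    (hv' : ∀ i, A'.mulVec (v' i) = (lam' i : ℂ) • v' i)
    (hw' : ∀ j, A'.mulVec (w' j) = (mu' j : ℂ) • w' j)
    (hlam' : Monotone lam') (hmu' : Monotone mu')
    (hvnorm' : ∀ i, hform p (q - 1) (v' i) (v' i) = 1)
    (hwnorm' : ∀ j, hform p (q - 1) (w' j) (w' j) = -1)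
    (hvv' : ∀ i i', i ≠ i' → hform p (q - 1) (v' i) (v' i') = 0)
    (hww' : ∀ j j', j ≠ j' → hform p (q - 1) (w' j) (w' j') = 0)
    (hvw' : ∀ i j, hform p (q - 1) (v' i) (w' j) = 0)
    (hbasis' : ∀ x : Fin (p + (q - 1)) → ℂ, ∃ (α : Fin p → ℂ) (β : Fin (q - 1) → ℂ),
      x = (∑ i, α i • v' i) + ∑ j, β j • w' j) :
    (∀ i : Fin (q - 1),
      mu ⟨(i : ℕ), by omega⟩ ≤ mu' i ∧ mu' i ≤ mu ⟨(i : ℕ) + 1, by omega⟩) ∧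
    (∀ j : ℕ, ∀ hj : j + 1 < p,
      lam ⟨j, by omega⟩ ≤ lam' ⟨j, by omega⟩ ∧
      lam' ⟨j, by omega⟩ ≤ lam ⟨j + 1, hj⟩) ∧
    lam ⟨p - 1, by omega⟩ ≤ lam' ⟨p - 1, by omega⟩ := by
  obtain ⟨q', rfl⟩ : ∃ q', q = q' + 1 := ⟨q - 1, by omega⟩
  set g : Fin (p + (q' + 1)) → ℂ := fun i => if (i : ℕ) < p then 1 else -1 with hgdef
  set g' : Fin (p + q') → ℂ := fun i => if (i : ℕ) < p then 1 else -1 with hg'def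
  have hdg : ∀ x y, dform g x y = hform p (q' + 1) x y := fun x y => by rw [hgdef]; rfl
  have hdg' : ∀ x y, dform g' x y = hform p (q' + 1 - 1) x y := fun x y => by rw [hg'def]; rfl
  have hgg' : ∀ i : Fin (p + q'), g i.castSucc = g' i := by
    intro i; rw [hgdef, hg'def]; simp only [Fin.coe_castSucc]
  have hgreal : ∀ i, (starRingEnd ℂ) (g i) = g i := by
    intro i; rw [hgdef]; by_cases h : (i : ℕ) < p <;> simp [h]
  have hg'real : ∀ i, (starRingEnd ℂ) (g' i) = g' i := by
    intro i; rw [hg'def]; by_cases h : (i : ℕ) < p <;> simp [h]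
  have hA'2 : ∀ (i j : Fin (p + q')), A' i j = A i.castSucc j.castSucc := by
    intro i j
    rw [hA'def, Matrix.submatrix_apply]
    congr 1 <;> exact Fin.ext (by simp)
  set c : ℝ := (mu ⟨q', by omega⟩ + lam ⟨0, by omega⟩) / 2 with hcdef
  have hadm2 : mu ⟨q', by omega⟩ < lam ⟨0, by omega⟩ := hadm
  have hcw : ∀ j : Fin (q' + 1), mu j < c := by
    intro j
    have h1 : mu j ≤ mu ⟨q', by omega⟩ := hmu (Fin.le_def.mpr (Nat.lt_succ_iff.mp j.isLt))
    rw [hcdef]; linarith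
  have hcv : ∀ i : Fin p, c < lam i := by
    intro i
    have h1 : lam ⟨0, by omega⟩ ≤ lam i := hlam (Fin.le_def.mpr (Nat.zero_le _))
    rw [hcdef]; linarith
  set U : Fin p ⊕ Fin (q' + 1) → (Fin (p + (q' + 1)) → ℂ) := Sum.elim v w with hUdef
  set N : Fin p ⊕ Fin (q' + 1) → ℝ := Sum.elim lam mu with hNdef
  set E1 : Fin p ⊕ Fin (q' + 1) → ℝ :=
    Sum.elim (fun _ => (1 : ℝ)) (fun _ => (-1 : ℝ)) with hE1def
  have hUeig : ∀ k, A.mulVec (U k) = ((N k : ℝ) : ℂ) • U k := by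
    rintro (i | j)
    · rw [hUdef, hNdef]; simp only [Sum.elim_inl]; exact hv i
    · rw [hUdef, hNdef]; simp only [Sum.elim_inr]; exact hw j
  have hUorth : ∀ k l, k ≠ l → dform g (U k) (U l) = 0 := by
    rintro (i | j) (i' | j') hne
    · rw [hUdef]; simp only [Sum.elim_inl]; rw [hdg]
      exact hvv i i' (by rintro rfl; exact hne rfl)
    · rw [hUdef]; simp only [Sum.elim_inl, Sum.elim_inr]; rw [hdg]; exact hvw i j'
    · rw [hUdef]; simp only [Sum.elim_inl, Sum.elim_inr]
      rw [← dform_conj hgreal, hdg, hvw i' j, map_zero]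
    · rw [hUdef]; simp only [Sum.elim_inr]; rw [hdg]
      exact hww j j' (by rintro rfl; exact hne rfl)
  have hUnorm : ∀ k, dform g (U k) (U k) = ((E1 k : ℝ) : ℂ) := by
    rintro (i | j)
    · rw [hUdef, hE1def]; simp only [Sum.elim_inl]; rw [hdg, hvnorm i]; norm_num
    · rw [hUdef, hE1def]; simp only [Sum.elim_inr]; rw [hdg, hwnorm j]; norm_num
  have hUne : ∀ k, E1 k ≠ 0 := by
    rintro (i | j) <;> rw [hE1def] <;> simp
  have hUpos : ∀ k, 0 < E1 k * (N k - c) := by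
    rintro (i | j)
    · rw [hE1def, hNdef]; simp only [Sum.elim_inl]; nlinarith [hcv i]
    · rw [hE1def, hNdef]; simp only [Sum.elim_inr]; nlinarith [hcw j]
  have hbasisU : ∀ x : Fin (p + (q' + 1)) → ℂ, ∃ co : Fin p ⊕ Fin (q' + 1) → ℂ, x = ∑ k, co k • U k := by
    intro x
    obtain ⟨α, β, h⟩ := hbasis x
    refine ⟨Sum.elim α β, ?_⟩
    rw [h, hUdef, Fintype.sum_sum_type]
    simp
  set U' : Fin p ⊕ Fin q' → (Fin (p + q') → ℂ) := Sum.elim v' w' with hU'def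
  set N' : Fin p ⊕ Fin q' → ℝ := Sum.elim lam' mu' with hN'def
  set E1' : Fin p ⊕ Fin q' → ℝ :=
    Sum.elim (fun _ => (1 : ℝ)) (fun _ => (-1 : ℝ)) with hE1'def
  have hU'eig : ∀ k, A'.mulVec (U' k) = ((N' k : ℝ) : ℂ) • U' k := by
    rintro (i | j)
    · rw [hU'def, hN'def]; simp only [Sum.elim_inl]; exact hv' i
    · rw [hU'def, hN'def]; simp only [Sum.elim_inr]; exact hw' j
  have hU'orth : ∀ k l, k ≠ l → dform g' (U' k) (U' l) = 0 := by
    rintro (i | j) (i' | j') hne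
    · rw [hU'def]; simp only [Sum.elim_inl]; rw [hdg']
      exact hvv' i i' (by rintro rfl; exact hne rfl)
    · rw [hU'def]; simp only [Sum.elim_inl, Sum.elim_inr]; rw [hdg']; exact hvw' i j'
    · rw [hU'def]; simp only [Sum.elim_inl, Sum.elim_inr]
      rw [← dform_conj hg'real, hdg', hvw' i' j, map_zero]
    · rw [hU'def]; simp only [Sum.elim_inr]; rw [hdg']
      exact hww' j j' (by rintro rfl; exact hne rfl)
  have hU'norm : ∀ k, dform g' (U' k) (U' k) = ((E1' k : ℝ) : ℂ) := by
    rintro (i | j)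
    · rw [hU'def, hE1'def]; simp only [Sum.elim_inl]; rw [hdg', hvnorm' i]; norm_num
    · rw [hU'def, hE1'def]; simp only [Sum.elim_inr]; rw [hdg', hwnorm' j]; norm_num
  have hU'ne : ∀ k, E1' k ≠ 0 := by
    rintro (i | j) <;> rw [hE1'def] <;> simp
  have hU'pos : ∀ k, 0 < E1' k * (N' k - c) := fun k =>
    prim_pos g g' hgg' A A' hA'2 U N E1 hUeig hUorth hUnorm hbasisU c hUpos
      (U' k) (N' k) (E1' k) (hU'eig k) (hU'norm k) (hU'ne k)
  have hc'v : ∀ i : Fin p, c < lam' i := by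
    intro i
    have h := hU'pos (Sum.inl i)
    rw [hE1'def, hN'def] at h
    simp only [Sum.elim_inl] at h
    nlinarith
  have hc'w : ∀ j : Fin q', mu' j < c := by
    intro j
    have h := hU'pos (Sum.inr j)
    rw [hE1'def, hN'def] at h
    simp only [Sum.elim_inr] at h
    nlinarith
  -- FACT1 : lam j ≤ lam' j for all j
  have FACT1 : ∀ j : Fin p, lam j ≤ lam' j := by
    intro j
    set σ1 : Fin (p - j.val) ⊕ Fin (q' + 1) → Fin p ⊕ Fin (q' + 1) :=
      Sum.elim (fun k => Sum.inl ⟨j.val + k.val, by omega⟩) Sum.inr with hσ1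
    set σ2 : Fin (j.val + 1) → Fin p ⊕ Fin q' :=
      fun k => Sum.inl ⟨k.val, by omega⟩ with hσ2
    have hinj1 : Function.Injective σ1 := by
      rintro (k | k) (l | l) h <;> rw [hσ1] at h <;>
        simp only [Sum.elim_inl, Sum.elim_inr, Sum.inl.injEq, Sum.inr.injEq,
          Fin.mk.injEq, reduceCtorEq] at h
      · exact congrArg Sum.inl (Fin.ext (by omega))
      · exact congrArg Sum.inr h
    have hinj2 : Function.Injective σ2 := by
      intro k l h
      rw [hσ2] at h
      simp only [Sum.inl.injEq, Fin.mk.injEq, reduceCtorEq] at h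
      exact Fin.ext h
    have hup1 : ∀ k, 0 ≤ E1 (σ1 k) * ((lam j - c)⁻¹ * (N (σ1 k) - c) - 1) := by
      rintro (k | k) <;> rw [hσ1, hE1def, hNdef] <;>
        simp only [Sum.elim_inl, Sum.elim_inr]
      · exact H1 (hcv j) (hlam (Fin.le_def.mpr (by simp <;> omega)))
      · exact H2 (hcv j) (hcw k)
    have hlow1 : ∀ k, 0 ≤ E1' (σ2 k) * (1 - (lam' j - c)⁻¹ * (N' (σ2 k) - c)) := by
      intro k
      rw [hσ2, hE1'def, hN'def]
      simp only [Sum.elim_inl]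
      exact H6 (hc'v j) (hlam' (Fin.le_def.mpr (by simp <;> omega)))
    have hkey :=
      masterB g g' hgg' A A' hA'2
        (fun k => U (σ1 k)) (fun k => N (σ1 k)) (fun k => E1 (σ1 k))
        (fun k => U' (σ2 k)) (fun k => N' (σ2 k)) (fun k => E1' (σ2 k))
        (fun k => hUeig (σ1 k))
        (fun k l hkl => hUorth (σ1 k) (σ1 l) (fun hh => hkl (hinj1 hh)))
        (fun k => hUnorm (σ1 k)) (fun k => hUne (σ1 k))
        (fun k => hU'eig (σ2 k))
        (fun k l hkl => hU'orth (σ2 k) (σ2 l) (fun hh => hkl (hinj2 hh)))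
        (fun k => hU'norm (σ2 k)) (fun k => hU'ne (σ2 k))
        (by simp only [Fintype.card_sum, Fintype.card_fin, Nat.add_eq]; have := j.isLt; omega)
        c ((lam j - c)⁻¹) ((lam' j - c)⁻¹)
        (fun k => hUpos (σ1 k)) hup1 hlow1
    exact H7 (hc'v j) (hcv j) hkey
  -- FACT2 : lam' j ≤ lam (j+1)
  have FACT2 : ∀ (j : ℕ) (hj : j + 1 < p), lam' ⟨j, by omega⟩ ≤ lam ⟨j + 1, hj⟩ := by
    intro j hj
    set σ1 : Fin (j + 2) → Fin p ⊕ Fin (q' + 1) :=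
      fun k => Sum.inl ⟨k.val, by omega⟩ with hσ1
    set σ2 : Fin (p - j) ⊕ Fin q' → Fin p ⊕ Fin q' :=
      Sum.elim (fun k => Sum.inl ⟨j + k.val, by omega⟩) Sum.inr with hσ2
    have hinj1 : Function.Injective σ1 := by
      intro k l h
      rw [hσ1] at h
      simp only [Sum.inl.injEq, Fin.mk.injEq, reduceCtorEq] at h
      exact Fin.ext h
    have hinj2 : Function.Injective σ2 := by
      rintro (k | k) (l | l) h <;> rw [hσ2] at h <;>
        simp only [Sum.elim_inl, Sum.elim_inr, Sum.inl.injEq, Sum.inr.injEq,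
          Fin.mk.injEq, reduceCtorEq] at h
      · exact congrArg Sum.inl (Fin.ext (by omega))
      · exact congrArg Sum.inr h
    have hup2 : ∀ k, 0 ≤ E1' (σ2 k) *
        ((lam' ⟨j, by omega⟩ - c)⁻¹ * (N' (σ2 k) - c) - 1) := by
      rintro (k | k) <;> rw [hσ2, hE1'def, hN'def] <;>
        simp only [Sum.elim_inl, Sum.elim_inr]
      · exact H1 (hc'v _) (hlam' (Fin.le_def.mpr (by simp <;> omega)))
      · exact H2 (hc'v _) (hc'w k)
    have hlow2 : ∀ k, 0 ≤ E1 (σ1 k) *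
        (1 - (lam ⟨j + 1, hj⟩ - c)⁻¹ * (N (σ1 k) - c)) := by
      intro k
      rw [hσ1, hE1def, hNdef]
      simp only [Sum.elim_inl]
      exact H6 (hcv _) (hlam (Fin.le_def.mpr (by simp <;> omega)))
    have hkey :=
      masterA g g' hgg' A A' hA'2
        (fun k => U (σ1 k)) (fun k => N (σ1 k)) (fun k => E1 (σ1 k))
        (fun k => U' (σ2 k)) (fun k => N' (σ2 k)) (fun k => E1' (σ2 k))
        (fun k => hUeig (σ1 k))
        (fun k l hkl => hUorth (σ1 k) (σ1 l) (fun hh => hkl (hinj1 hh)))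
        (fun k => hUnorm (σ1 k)) (fun k => hUne (σ1 k))
        (fun k => hU'eig (σ2 k))
        (fun k l hkl => hU'orth (σ2 k) (σ2 l) (fun hh => hkl (hinj2 hh)))
        (fun k => hU'norm (σ2 k)) (fun k => hU'ne (σ2 k))
        (by simp only [Fintype.card_sum, Fintype.card_fin, Nat.add_eq]; omega)
        c ((lam' ⟨j, by omega⟩ - c)⁻¹) ((lam ⟨j + 1, hj⟩ - c)⁻¹)
        (fun k => hU'pos (σ2 k)) hup2 hlow2
    exact H7 (hcv _) (hc'v _) hkey
  -- FACT3 : mu i ≤ mu' i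
  have FACT3 : ∀ i : Fin q', mu ⟨i.val, by omega⟩ ≤ mu' i := by
    intro i
    set σ1 : Fin (q' + 1 - i.val) → Fin p ⊕ Fin (q' + 1) :=
      fun k => Sum.inr ⟨i.val + k.val, by omega⟩ with hσ1
    set σ2 : Fin (i.val + 1) ⊕ Fin p → Fin p ⊕ Fin q' :=
      Sum.elim (fun k => Sum.inr ⟨k.val, by omega⟩) Sum.inl with hσ2
    have hinj1 : Function.Injective σ1 := by
      intro k l h
      rw [hσ1] at h
      simp only [Sum.inr.injEq, Fin.mk.injEq, reduceCtorEq] at h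
      exact Fin.ext (by omega)
    have hinj2 : Function.Injective σ2 := by
      rintro (k | k) (l | l) h <;> rw [hσ2] at h <;>
        simp only [Sum.elim_inl, Sum.elim_inr, Sum.inl.injEq, Sum.inr.injEq,
          Fin.mk.injEq, reduceCtorEq] at h
      · exact congrArg Sum.inl (Fin.ext (by omega))
      · exact congrArg Sum.inr h
    have hup3 : ∀ k, 0 ≤ E1 (σ1 k) * ((mu ⟨i.val, by omega⟩ - c)⁻¹ * (N (σ1 k) - c) - 1) := by
      intro k
      rw [hσ1, hE1def, hNdef]
      simp only [Sum.elim_inr]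
      exact H5 (hcw _) (hmu (Fin.le_def.mpr (by simp <;> omega))) (hcw _)
    have hlow3 : ∀ k, 0 ≤ E1' (σ2 k) * (1 - (mu' i - c)⁻¹ * (N' (σ2 k) - c)) := by
      rintro (k | k) <;> rw [hσ2, hE1'def, hN'def] <;>
        simp only [Sum.elim_inl, Sum.elim_inr]
      · exact H3 (hc'w i) (hmu' (Fin.le_def.mpr (by simp <;> omega)))
      · exact H4 (hc'w i) (hc'v k)
    have hkey :=
      masterB g g' hgg' A A' hA'2
        (fun k => U (σ1 k)) (fun k => N (σ1 k)) (fun k => E1 (σ1 k))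
        (fun k => U' (σ2 k)) (fun k => N' (σ2 k)) (fun k => E1' (σ2 k))
        (fun k => hUeig (σ1 k))
        (fun k l hkl => hUorth (σ1 k) (σ1 l) (fun hh => hkl (hinj1 hh)))
        (fun k => hUnorm (σ1 k)) (fun k => hUne (σ1 k))
        (fun k => hU'eig (σ2 k))
        (fun k l hkl => hU'orth (σ2 k) (σ2 l) (fun hh => hkl (hinj2 hh)))
        (fun k => hU'norm (σ2 k)) (fun k => hU'ne (σ2 k))
        (by simp only [Fintype.card_sum, Fintype.card_fin, Nat.add_eq]; have := i.isLt; omega)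
        c ((mu ⟨i.val, by omega⟩ - c)⁻¹) ((mu' i - c)⁻¹)
        (fun k => hUpos (σ1 k)) hup3 hlow3
    exact H8 (hc'w i) (hcw _) hkey
  -- FACT4 : mu' i ≤ mu (i+1)
  have FACT4 : ∀ i : Fin q', mu' i ≤ mu ⟨i.val + 1, by omega⟩ := by
    intro i
    set σ1 : Fin (i.val + 2) ⊕ Fin p → Fin p ⊕ Fin (q' + 1) :=
      Sum.elim (fun k => Sum.inr ⟨k.val, by omega⟩) Sum.inl with hσ1
    set σ2 : Fin (q' - i.val) → Fin p ⊕ Fin q' :=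
      fun k => Sum.inr ⟨i.val + k.val, by omega⟩ with hσ2
    have hinj1 : Function.Injective σ1 := by
      rintro (k | k) (l | l) h <;> rw [hσ1] at h <;>
        simp only [Sum.elim_inl, Sum.elim_inr, Sum.inl.injEq, Sum.inr.injEq,
          Fin.mk.injEq, reduceCtorEq] at h
      · exact congrArg Sum.inl (Fin.ext (by omega))
      · exact congrArg Sum.inr h
    have hinj2 : Function.Injective σ2 := by
      intro k l h
      rw [hσ2] at h
      simp only [Sum.inr.injEq, Fin.mk.injEq, reduceCtorEq] at h
      exact Fin.ext (by omega)
    have hup4 : ∀ k, 0 ≤ E1' (σ2 k) * ((mu' i - c)⁻¹ * (N' (σ2 k) - c) - 1) := by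
      intro k
      rw [hσ2, hE1'def, hN'def]
      simp only [Sum.elim_inr]
      exact H5 (hc'w _) (hmu' (Fin.le_def.mpr (by simp <;> omega))) (hc'w _)
    have hlow4 : ∀ k, 0 ≤ E1 (σ1 k) *
        (1 - (mu ⟨i.val + 1, by omega⟩ - c)⁻¹ * (N (σ1 k) - c)) := by
      rintro (k | k) <;> rw [hσ1, hE1def, hNdef] <;>
        simp only [Sum.elim_inl, Sum.elim_inr]
      · exact H3 (hcw _) (hmu (Fin.le_def.mpr (by simp <;> omega)))
      · exact H4 (hcw _) (hcv k)
    have hkey :=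
      masterA g g' hgg' A A' hA'2
        (fun k => U (σ1 k)) (fun k => N (σ1 k)) (fun k => E1 (σ1 k))
        (fun k => U' (σ2 k)) (fun k => N' (σ2 k)) (fun k => E1' (σ2 k))
        (fun k => hUeig (σ1 k))
        (fun k l hkl => hUorth (σ1 k) (σ1 l) (fun hh => hkl (hinj1 hh)))
        (fun k => hUnorm (σ1 k)) (fun k => hUne (σ1 k))
        (fun k => hU'eig (σ2 k))
        (fun k l hkl => hU'orth (σ2 k) (σ2 l) (fun hh => hkl (hinj2 hh)))
        (fun k => hU'norm (σ2 k)) (fun k => hU'ne (σ2 k))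
        (by simp only [Fintype.card_sum, Fintype.card_fin, Nat.add_eq]; have := i.isLt; omega)
        c ((mu' i - c)⁻¹) ((mu ⟨i.val + 1, by omega⟩ - c)⁻¹)
        (fun k => hU'pos (σ2 k)) hup4 hlow4
    exact H8 (hcw _) (hc'w _) hkey
  refine ⟨fun i => ⟨FACT3 i, FACT4 i⟩, fun j hj => ⟨FACT1 ⟨j, by omega⟩, FACT2 j hj⟩,
    FACT1 ⟨p - 1, by omega⟩⟩
end

section
/- Characteristic polynomial of a pseudo-Hermitian rank-one perturbation: let J = diag(1,−1) on ℂ², let e be a 2×2 complex matrix with e*J = Je, with eigenvectors u, v ∈ ℂ² satisfying e·u = δ·u, e·v = γ·v for real δ, γ, ⟨u,u⟩ = 1, ⟨v,v⟩ = −1, ⟨u,v⟩ = 0. Let r ∈ ℝ, α, β ∈ ℂ, w = α·u + β·v, and let L = e + r·(w ⊗ w†) be the matrix with entries L_{ij} = e_{ij} + r·wᵢ·(J w̄)ⱼ. Then for every λ ∈ ℂ: det(λ·I − L) = (λ−δ)(λ−γ) − r|α|²(λ−γ) + r|β|²(λ−δ). -/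
open Matrix

/-- The pseudo-Hermitian form on ℂ² for J = diag(1,−1):
`⟨x,y⟩ = x̄₁y₁ − x̄₂y₂`. -/
noncomputable def hform2 (x y : Fin 2 → ℂ) : ℂ :=
  (starRingEnd ℂ) (x 0) * y 0 - (starRingEnd ℂ) (x 1) * y 1

/-- `J = diag(1,−1)` on ℂ². -/
def J2 : Matrix (Fin 2) (Fin 2) ℂ := Matrix.diagonal ![1, -1]

/-- Characteristic polynomial of a pseudo-Hermitian rank-one perturbation:
if e is J-Hermitian with eigenvectors u (timelike, eigenvalue δ) and v
(spacelike, eigenvalue γ), w = αu + βv and L = e + r·(w ⊗ w†), then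
`det(λI − L) = (λ−δ)(λ−γ) − r|α|²(λ−γ) + r|β|²(λ−δ)`. -/
theorem charpoly_rank_one_perturbation
    (e : Matrix (Fin 2) (Fin 2) ℂ)
    (he : eᴴ * J2 = J2 * e)
    (u v : Fin 2 → ℂ) (δ γ : ℝ)
    (hu : e.mulVec u = (δ : ℂ) • u)
    (hv : e.mulVec v = (γ : ℂ) • v)
    (huu : hform2 u u = 1)
    (hvv : hform2 v v = -1)
    (huv : hform2 u v = 0)
    (r : ℝ) (α β : ℂ)
    (w : Fin 2 → ℂ) (hw : w = α • u + β • v)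
    (L : Matrix (Fin 2) (Fin 2) ℂ)
    (hL : L = Matrix.of fun i j =>
      e i j + (r : ℂ) * w i * ((if (j : ℕ) = 0 then 1 else -1) * (starRingEnd ℂ) (w j))) :
    ∀ lam : ℂ,
      Matrix.det (lam • (1 : Matrix (Fin 2) (Fin 2) ℂ) - L) =
        (lam - δ) * (lam - γ) - (r : ℂ) * (‖α‖ ^ 2 : ℝ) * (lam - γ)
          + (r : ℂ) * (‖β‖ ^ 2 : ℝ) * (lam - δ) := by
  intro lam
  set cc := starRingEnd ℂ with hcc
  -- scalar versions of the form hypotheses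
  have huu' : cc (u 0) * u 0 - cc (u 1) * u 1 = 1 := huu
  have hvv' : cc (v 0) * v 0 - cc (v 1) * v 1 = -1 := hvv
  have huv' : cc (u 0) * v 0 - cc (u 1) * v 1 = 0 := huv
  have hvu' : cc (v 0) * u 0 - cc (v 1) * u 1 = 0 := by
    have h := congrArg cc huv
    simp only [hform2, hcc, map_sub, _root_.map_mul, Complex.conj_conj, map_zero] at h
    linear_combination h
  -- scalar versions of the eigenvector equations
  have hu0 : e 0 0 * u 0 + e 0 1 * u 1 = (δ : ℂ) * u 0 := by
    have h := congrFun hu 0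
    simpa [Matrix.mulVec, dotProduct, Fin.sum_univ_two] using h
  have hu1 : e 1 0 * u 0 + e 1 1 * u 1 = (δ : ℂ) * u 1 := by
    have h := congrFun hu 1
    simpa [Matrix.mulVec, dotProduct, Fin.sum_univ_two] using h
  have hv0 : e 0 0 * v 0 + e 0 1 * v 1 = (γ : ℂ) * v 0 := by
    have h := congrFun hv 0
    simpa [Matrix.mulVec, dotProduct, Fin.sum_univ_two] using h
  have hv1 : e 1 0 * v 0 + e 1 1 * v 1 = (γ : ℂ) * v 1 := by
    have h := congrFun hv 1
    simpa [Matrix.mulVec, dotProduct, Fin.sum_univ_two] using h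
  -- coordinates of w
  have hw0 : w 0 = α * u 0 + β * v 0 := by rw [hw]; simp
  have hw1 : w 1 = α * u 1 + β * v 1 := by rw [hw]; simp
  -- the change-of-basis matrix
  set P : Matrix (Fin 2) (Fin 2) ℂ := Matrix.of ![![u 0, v 0], ![u 1, v 1]] with hPdef
  set Q : Matrix (Fin 2) (Fin 2) ℂ := J2 * Pᴴ * J2 with hQdef
  have hJJ : J2 * J2 = 1 := by
    ext i j
    fin_cases i <;> fin_cases j <;>
      simp [J2, Matrix.mul_apply, Fin.sum_univ_two, Matrix.one_apply]
  have hPJP : Pᴴ * J2 * P = J2 := by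
    ext i j
    fin_cases i <;> fin_cases j <;>
      simp [hPdef, J2, Matrix.mul_apply, Fin.sum_univ_two,
        Matrix.conjTranspose_apply, hcc] <;>
      first
        | linear_combination huu'
        | linear_combination huv'
        | linear_combination hvu'
        | linear_combination hvv'
  have hQP : Q * P = 1 := by
    have h1 : Pᴴ * (J2 * P) = J2 := by rw [← Matrix.mul_assoc]; exact hPJP
    calc Q * P = J2 * (Pᴴ * (J2 * P)) := by rw [hQdef]; simp only [Matrix.mul_assoc]
    _ = 1 := by rw [h1, hJJ]
  have hPQ : P * Q = 1 := mul_eq_one_comm.mp hQP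
  -- e conjugates to the diagonal matrix
  have heP : e * P = P * Matrix.diagonal ![(δ : ℂ), (γ : ℂ)] := by
    ext i j
    fin_cases i <;> fin_cases j <;>
      simp [hPdef, Matrix.mul_apply, Fin.sum_univ_two, Matrix.diagonal] <;>
      first
        | linear_combination hu0
        | linear_combination hu1
        | linear_combination hv0
        | linear_combination hv1
  have hQeP : Q * e * P = Matrix.diagonal ![(δ : ℂ), (γ : ℂ)] := by
    rw [Matrix.mul_assoc, heP, ← Matrix.mul_assoc, hQP, Matrix.one_mul]
  -- the rank-one part
  set R : Matrix (Fin 2) (Fin 2) ℂ :=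
    Matrix.of (fun i j => w i * ((if (j : ℕ) = 0 then 1 else -1) * cc (w j))) with hRdef
  have hL' : L = e + (r : ℂ) • R := by
    rw [hL]
    ext i j
    simp [hRdef, Matrix.add_apply, hcc]
    ring
  have hwu : cc (w 0) * u 0 - cc (w 1) * u 1 = cc α := by
    rw [hw0, hw1]
    simp only [hcc, map_add, _root_.map_mul]
    linear_combination cc α * huu' + cc β * hvu'
  have hwv : cc (w 0) * v 0 - cc (w 1) * v 1 = -(cc β) := by
    rw [hw0, hw1]
    simp only [hcc, map_add, _root_.map_mul]
    linear_combination cc α * huv' + cc β * hvv'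
  have hRP : R * P =
      Matrix.of ![![w 0 * cc α, -(w 0 * cc β)], ![w 1 * cc α, -(w 1 * cc β)]] := by
    ext i j
    fin_cases i <;> fin_cases j <;>
      simp [hRdef, hPdef, Matrix.mul_apply, Fin.sum_univ_two] <;>
      first
        | linear_combination (w 0) * hwu
        | linear_combination (w 0) * hwv
        | linear_combination (w 1) * hwu
        | linear_combination (w 1) * hwv
  have hQRP : Q * (R * P) =
      Matrix.of ![![α * cc α, -(α * cc β)], ![β * cc α, -(β * cc β)]] := by
    rw [hRP]
    ext i j
    fin_cases i <;> fin_cases j <;>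
      simp [hQdef, hPdef, J2, Matrix.mul_apply, Fin.sum_univ_two,
        Matrix.conjTranspose_apply, Matrix.diagonal, hw0, hw1, hcc] <;>
      first
        | linear_combination (cc α * α) * huu' + (cc α * β) * huv'
        | linear_combination (-(cc β * α)) * huu' + (-(cc β * β)) * huv'
        | linear_combination (-(cc α * α)) * hvu' + (-(cc α * β)) * hvv'
        | linear_combination (cc β * α) * hvu' + (cc β * β) * hvv'
  -- the conjugated matrix
  have hM : Q * L * P =
      Matrix.of ![![(δ : ℂ) + (r : ℂ) * (α * cc α), -((r : ℂ) * (α * cc β))],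
        ![(r : ℂ) * (β * cc α), (γ : ℂ) - (r : ℂ) * (β * cc β)]] := by
    rw [hL', Matrix.mul_add, Matrix.add_mul, Matrix.mul_smul, Matrix.smul_mul,
      hQeP, Matrix.mul_assoc, hQRP]
    ext i j
    fin_cases i <;> fin_cases j <;>
      simp [Matrix.diagonal, Matrix.add_apply] <;> ring
  -- factor λI − L through P and Q
  have hfact : lam • (1 : Matrix (Fin 2) (Fin 2) ℂ) - L =
      P * (lam • (1 : Matrix (Fin 2) (Fin 2) ℂ) - Q * L * P) * Q := by
    rw [Matrix.mul_sub, Matrix.sub_mul]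
    congr 1
    · rw [Matrix.mul_smul, Matrix.mul_one, Matrix.smul_mul, hPQ]
    · have h2 : P * (Q * L * P) * Q = L := by
        simp only [Matrix.mul_assoc]
        rw [hPQ, Matrix.mul_one, ← Matrix.mul_assoc, hPQ, Matrix.one_mul]
      rw [h2]
  rw [hfact, Matrix.det_mul, Matrix.det_mul, mul_right_comm, ← Matrix.det_mul, hPQ,
    Matrix.det_one, one_mul, hM]
  have hα : α * cc α = ((‖α‖ ^ 2 : ℝ) : ℂ) := by push_cast; exact Complex.mul_conj' α
  have hβ : β * cc β = ((‖β‖ ^ 2 : ℝ) : ℂ) := by push_cast; exact Complex.mul_conj' β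
  rw [Matrix.one_fin_two, Matrix.det_fin_two]
  simp only [Matrix.sub_apply, Matrix.smul_apply, Matrix.of_apply,
    Matrix.cons_val', Matrix.cons_val_zero, Matrix.smul_cons, Matrix.smul_empty, smul_eq_mul, mul_one, mul_zero, Matrix.cons_val_one, Matrix.head_cons,
    Matrix.head_fin_const, Matrix.empty_val', Matrix.cons_val_fin_one, smul_eq_mul]
  linear_combination (-(r : ℂ) * lam + r * γ) * hα + ((r : ℂ) * lam - r * δ) * hβ
end

section
/- Let γ < δ be real numbers, r > 0, and a, b > 0 real with a − b = 1. Then the quadratic polynomial p(λ) = (λ−δ)(λ−γ) − r·a·(λ−γ) + r·b·(λ−δ) has exactly two real roots: one in the open interval (−∞, γ) and one in the open interval (δ, +∞). -/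
/-- For γ < δ, r > 0, and a, b > 0 with a − b = 1, the monic quadratic
`p(λ) = (λ−δ)(λ−γ) − r·a·(λ−γ) + r·b·(λ−δ)` has exactly two real roots, one
in (−∞, γ) and one in (δ, +∞). -/
theorem quadratic_roots_outside
    (γ δ r a b : ℝ) (hγδ : γ < δ) (hr : 0 < r)
    (ha : 0 < a) (hb : 0 < b) (hab : a - b = 1) :
    ∃ x y : ℝ, x < γ ∧ δ < y ∧
      (∀ l : ℝ, (l - δ) * (l - γ) - r * a * (l - γ) + r * b * (l - δ)
        = (l - x) * (l - y)) := by
  set s : ℝ := γ + δ + r with hs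
  set q : ℝ := γ * δ + r * a * γ - r * b * δ with hq
  have hrb : 0 < r * b := mul_pos hr hb
  have hra : 0 < r * a := mul_pos hr ha
  have h1 : (s - 2 * γ) ^ 2 < s ^ 2 - 4 * q := by
    have : γ ^ 2 - s * γ + q = r * b * (γ - δ) := by
      rw [hs, hq]; linear_combination r * γ * hab
    nlinarith [this, hrb, hγδ]
  have h2 : (s - 2 * δ) ^ 2 < s ^ 2 - 4 * q := by
    have : δ ^ 2 - s * δ + q = -(r * a * (δ - γ)) := by
      rw [hs, hq]; linear_combination r * δ * hab
    nlinarith [this, hra, hγδ]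
  set D : ℝ := s ^ 2 - 4 * q with hD
  have hD0 : 0 ≤ D := le_of_lt (lt_of_le_of_lt (sq_nonneg _) h1)
  have hsq : Real.sqrt D ^ 2 = D := Real.sq_sqrt hD0
  have h1' : |s - 2 * γ| < Real.sqrt D := by
    rw [← Real.sqrt_sq_eq_abs]; exact Real.sqrt_lt_sqrt (sq_nonneg _) h1
  have h2' : |s - 2 * δ| < Real.sqrt D := by
    rw [← Real.sqrt_sq_eq_abs]; exact Real.sqrt_lt_sqrt (sq_nonneg _) h2
  refine ⟨(s - Real.sqrt D) / 2, (s + Real.sqrt D) / 2, ?_, ?_, ?_⟩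
  · have := le_abs_self (s - 2 * γ); linarith
  · have := neg_abs_le (s - 2 * δ); linarith
  · intro l
    rw [hs, hD, hq]
    linear_combination (1 / 4 : ℝ) * hsq + (-(r * l)) * hab
end

section
/- Minkowski triangle inequalities for diagonals of a closed polygon: let n = p+q with p, q ≥ 1, and let u₁, …, u_n ∈ ℝ³ with uᵢ future timelike for 1 ≤ i ≤ p and past timelike for p+1 ≤ i ≤ n, satisfying u₁ + ⋯ + u_n = 0. Set rᵢ = ‖uᵢ‖ and, for 1 ≤ ℓ ≤ n−1, d_ℓ = ‖u₁ + ⋯ + u_ℓ‖ (these partial sums are timelike). Then d_ℓ ≥ d_{ℓ−1} + r_ℓ for 2 ≤ ℓ ≤ p, and d_ℓ ≥ d_{ℓ+1} + r_{ℓ+1} for p ≤ ℓ ≤ n−2. -/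
/-- The Minkowski dot product on ℝ³ with coordinates (x, y, t):
`v₁ ∘̇ v₂ = −x₁x₂ − y₁y₂ + t₁t₂`. -/
def mdot (v w : Fin 3 → ℝ) : ℝ :=
  -(v 0 * w 0) - v 1 * w 1 + v 2 * w 2

/-- A vector is future timelike if `v ∘̇ v > 0` and its t-coordinate is positive. -/
def FutureTimelike (v : Fin 3 → ℝ) : Prop :=
  0 < mdot v v ∧ 0 < v 2

/-- A vector is past timelike if `v ∘̇ v > 0` and its t-coordinate is negative. -/
def PastTimelike (v : Fin 3 → ℝ) : Prop :=
  0 < mdot v v ∧ v 2 < 0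

/-- The Minkowski length of a (timelike) vector. -/
noncomputable def mnorm (v : Fin 3 → ℝ) : ℝ :=
  Real.sqrt (mdot v v)

lemma key_ineq (x0 x1 x2 y0 y1 y2 : ℝ)
    (hv1 : 0 < -(x0*x0) - x1*x1 + x2*x2) (hv2 : 0 < x2)
    (hw1 : 0 < -(y0*y0) - y1*y1 + y2*y2) (hw2 : 0 < y2) :
    (-(x0*x0) - x1*x1 + x2*x2) * (-(y0*y0) - y1*y1 + y2*y2)
      ≤ (-(x0*y0) - x1*y1 + x2*y2) ^ 2 ∧ 0 < -(x0*y0) - x1*y1 + x2*y2 := by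
  set a := Real.sqrt (x0 ^ 2 + x1 ^ 2) with ha
  set b := Real.sqrt (y0 ^ 2 + y1 ^ 2) with hb
  have ha2 : a ^ 2 = x0 ^ 2 + x1 ^ 2 := Real.sq_sqrt (by positivity)
  have hb2 : b ^ 2 = y0 ^ 2 + y1 ^ 2 := Real.sq_sqrt (by positivity)
  have ha0 : 0 ≤ a := Real.sqrt_nonneg _
  have hb0 : 0 ≤ b := Real.sqrt_nonneg _
  have hva : a < x2 := by nlinarith
  have hwb : b < y2 := by nlinarith
  have hcs : x0*y0 + x1*y1 ≤ a * b := by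
    nlinarith [sq_nonneg (x0*y1 - x1*y0), mul_nonneg ha0 hb0,
      sq_nonneg (a*b - (x0*y0 + x1*y1)), sq_nonneg (a*b + (x0*y0 + x1*y1))]
  have hab : 0 < x2*y2 - a*b := by nlinarith
  have hpos : 0 < -(x0*y0) - x1*y1 + x2*y2 := by nlinarith
  refine ⟨?_, hpos⟩
  have e1 : a^2 * b^2 = (x0^2+x1^2) * (y0^2+y1^2) := by rw [ha2, hb2]
  have e2 : x2^2 * b^2 = x2^2 * (y0^2+y1^2) := by rw [hb2]
  have e3 : y2^2 * a^2 = y2^2 * (x0^2+x1^2) := by rw [ha2]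
  have h1 : 0 ≤ (a*b - (x0*y0+x1*y1)) * (2*(x2*y2) - a*b - (x0*y0+x1*y1)) :=
    mul_nonneg (by linarith) (by linarith)
  have h2 : 0 ≤ (x2*b - a*y2)^2 := sq_nonneg _
  nlinarith [e1, e2, e3, h1, h2]

lemma fut_mdot_ge (v w : Fin 3 → ℝ) (hv : FutureTimelike v) (hw : FutureTimelike w) :
    mnorm v * mnorm w ≤ mdot v w := by
  obtain ⟨hvd, hv2⟩ := hv
  obtain ⟨hwd, hw2⟩ := hw
  have hv1 : 0 < -(v 0 * v 0) - v 1 * v 1 + v 2 * v 2 := by simpa [mdot] using hvd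
  have hw1 : 0 < -(w 0 * w 0) - w 1 * w 1 + w 2 * w 2 := by simpa [mdot] using hwd
  obtain ⟨hk, hp⟩ := key_ineq (v 0) (v 1) (v 2) (w 0) (w 1) (w 2) hv1 hv2 hw1 hw2
  have hkey : mdot v v * mdot w w ≤ mdot v w ^ 2 := by simp only [mdot]; exact hk
  have hpos' : (0:ℝ) ≤ mdot v w := by simp only [mdot]; linarith
  calc mnorm v * mnorm w = Real.sqrt (mdot v v * mdot w w) :=
        (Real.sqrt_mul hvd.le _).symm
    _ ≤ Real.sqrt (mdot v w ^ 2) := Real.sqrt_le_sqrt hkey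
    _ = mdot v w := Real.sqrt_sq hpos'

lemma fut_add (v w : Fin 3 → ℝ) (hv : FutureTimelike v) (hw : FutureTimelike w) :
    FutureTimelike (v + w) ∧ mnorm v + mnorm w ≤ mnorm (v + w) := by
  have key := fut_mdot_ge v w hv hw
  have hm : mdot (v + w) (v + w) = mdot v v + 2 * mdot v w + mdot w w := by
    simp only [mdot, Pi.add_apply]; ring
  have hnv : 0 ≤ mnorm v := Real.sqrt_nonneg _
  have hnw : 0 ≤ mnorm w := Real.sqrt_nonneg _
  have hv2 : mnorm v ^ 2 = mdot v v := Real.sq_sqrt hv.1.le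
  have hw2 : mnorm w ^ 2 = mdot w w := Real.sq_sqrt hw.1.le
  have hmn : mnorm v * mnorm w ≥ 0 := mul_nonneg hnv hnw
  have hbig : (mnorm v + mnorm w) ^ 2 ≤ mdot (v + w) (v + w) := by
    rw [hm]; nlinarith
  constructor
  · refine ⟨?_, ?_⟩
    · rw [hm]; nlinarith [hv.1, hw.1]
    · have := hv.2; have := hw.2; simp only [Pi.add_apply]; linarith
  · show mnorm v + mnorm w ≤ Real.sqrt (mdot (v + w) (v + w))
    exact (Real.le_sqrt (by positivity) (le_trans (sq_nonneg _) hbig)).mpr hbig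

lemma sum_fut (g : ℕ → Fin 3 → ℝ) :
    ∀ m, 1 ≤ m → (∀ i, i < m → FutureTimelike (g i)) →
      FutureTimelike (∑ i ∈ Finset.range m, g i) := by
  intro m
  induction m with
  | zero => omega
  | succ k ih =>
    intro _ h
    by_cases hk : k = 0
    · subst hk; simpa using h 0 (by omega)
    · rw [Finset.sum_range_succ]
      exact (fut_add _ _ (ih (by omega) (fun i hi => h i (by omega))) (h k (by omega))).1

lemma mnorm_neg (v : Fin 3 → ℝ) : mnorm (-v) = mnorm v := by
  have : mdot (-v) (-v) = mdot v v := by simp only [mdot, Pi.neg_apply]; ring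
  rw [mnorm, mnorm, this]

lemma past_neg (v : Fin 3 → ℝ) (h : PastTimelike v) : FutureTimelike (-v) := by
  obtain ⟨h1, h2⟩ := h
  have hm : mdot (-v) (-v) = mdot v v := by simp only [mdot, Pi.neg_apply]; ring
  refine ⟨by rw [hm]; exact h1, ?_⟩
  simp only [Pi.neg_apply]; linarith


/-- Minkowski triangle inequalities for the diagonals of a closed polygon with
sides u₁, …, u_n (0-indexed here as u 0, …, u (n−1)), the first p sides future
timelike and the last q past timelike: with rᵢ = ‖uᵢ‖ and
d_ℓ = ‖u₁ + ⋯ + u_ℓ‖, one has d_ℓ ≥ d_{ℓ−1} + r_ℓ for 2 ≤ ℓ ≤ p and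
d_ℓ ≥ d_{ℓ+1} + r_{ℓ+1} for p ≤ ℓ ≤ n−2. -/
theorem polygon_diagonal_inequalities
    (p q n : ℕ) (hp : 1 ≤ p) (hq : 1 ≤ q) (hn : n = p + q)
    (u : ℕ → (Fin 3 → ℝ))
    (hfut : ∀ i, i < p → FutureTimelike (u i))
    (hpast : ∀ i, p ≤ i → i < n → PastTimelike (u i))
    (hclosed : ∑ i ∈ Finset.range n, u i = 0)
    (d : ℕ → ℝ)
    (hd : ∀ ℓ, d ℓ = mnorm (∑ i ∈ Finset.range ℓ, u i))
    (r : ℕ → ℝ)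
    (hr : ∀ i, r i = mnorm (u (i - 1))) :
    (∀ ℓ, 2 ≤ ℓ → ℓ ≤ p → d ℓ ≥ d (ℓ - 1) + r ℓ) ∧
    (∀ ℓ, p ≤ ℓ → ℓ ≤ n - 2 → d ℓ ≥ d (ℓ + 1) + r (ℓ + 1)) := by
  constructor
  · intro ℓ h2 hℓp
    obtain ⟨k, rfl⟩ : ∃ k, ℓ = k + 1 := ⟨ℓ - 1, by omega⟩
    have hk1 : k + 1 - 1 = k := rfl
    have hS : ∑ i ∈ Finset.range (k + 1), u i = (∑ i ∈ Finset.range k, u i) + u k :=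
      Finset.sum_range_succ u k
    have hfk : FutureTimelike (∑ i ∈ Finset.range k, u i) :=
      sum_fut u k (by omega) (fun i hi => hfut i (by omega))
    have huk : FutureTimelike (u k) := hfut k (by omega)
    have hmain := (fut_add _ _ hfk huk).2
    rw [hd (k + 1), hr (k + 1), hk1, hd k, hS]
    exact hmain
  · intro ℓ hpℓ hℓn2
    have hn2 : 2 ≤ n := by omega
    have hℓn : ℓ + 2 ≤ n := by omega
    have hsplit : ∀ a, a ≤ n →
        ∑ i ∈ Finset.range a, u i = ∑ i ∈ Finset.range (n - a), -(u (a + i)) := by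
      intro a hale
      have h1 : ∑ i ∈ Finset.range (a + (n - a)), u i
          = (∑ i ∈ Finset.range a, u i) + ∑ i ∈ Finset.range (n - a), u (a + i) :=
        Finset.sum_range_add u a (n - a)
      rw [show a + (n - a) = n by omega, hclosed] at h1
      have h2 : (∑ i ∈ Finset.range a, u i) = -∑ i ∈ Finset.range (n - a), u (a + i) :=
        eq_neg_of_add_eq_zero_left h1.symm
      rw [h2, ← Finset.sum_neg_distrib]
    have hS1 := hsplit ℓ (by omega)
    have hS2 := hsplit (ℓ + 1) (by omega)
    set m := n - (ℓ + 1) with hm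
    have hnl : n - ℓ = m + 1 := by omega
    have hstep : ∑ i ∈ Finset.range (n - ℓ), -(u (ℓ + i))
        = (∑ i ∈ Finset.range m, -(u (ℓ + 1 + i))) + -(u ℓ) := by
      have hpeel : ∑ i ∈ Finset.range (m + 1), -(u (ℓ + i))
          = (∑ i ∈ Finset.range m, -(u (ℓ + (i + 1)))) + -(u (ℓ + 0)) :=
        Finset.sum_range_succ' (fun i => -(u (ℓ + i))) m
      have hcongr : ∑ i ∈ Finset.range m, -(u (ℓ + (i + 1)))
          = ∑ i ∈ Finset.range m, -(u (ℓ + 1 + i)) :=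
        Finset.sum_congr rfl (fun i _ => by rw [show ℓ + (i + 1) = ℓ + 1 + i from by omega])
      rw [hnl, hpeel, hcongr, add_zero]
    have hfse : ∀ i, i < m → FutureTimelike (-(u (ℓ + 1 + i))) :=
      fun i hi => past_neg _ (hpast (ℓ + 1 + i) (by omega) (by omega))
    have hA : FutureTimelike (∑ i ∈ Finset.range m, -(u (ℓ + 1 + i))) :=
      sum_fut _ m (by omega) hfse
    have hB : FutureTimelike (-(u ℓ)) := past_neg _ (hpast ℓ hpℓ (by omega))
    have hmain := (fut_add _ _ hA hB).2
    rw [hd ℓ, hd (ℓ + 1), hr (ℓ + 1), hS1, hS2, hstep,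
      show ℓ + 1 - 1 = ℓ from rfl, ← mnorm_neg (u ℓ)]
    exact hmain
end
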